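/- (Lemma: the Markov approximation is less capable.) Let 𝒮, 𝒮′, 𝒳 be finite sets, let κ be a channel from 𝒮 to 𝒳, let f : 𝒮 → 𝒮′, and let p be a probability distribution on 𝒮 with full support. Define the Markov-approximation channel κ′ from 𝒮 to 𝒳 by κ′ x s := ( ∑_{s' : f(s')=f(s)} p s' · κ x s' ) / ( ∑_{s' : f(s')=f(s)} p s' ). Then the mutual informations satisfy I(p, κ′) ≤ I(p, κ). -/

import Mathlib

open Finset

/-- A probability distribution on a finite set. -/
def IsDist {S : Type} [Fintype S] (p : S → ℝ) : Prop :=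
  (∀ s, 0 ≤ p s) ∧ ∑ s, p s = 1

/-- A channel from `S` to `X`: a column-stochastic matrix. -/
def IsChannel {S X : Type} [Fintype S] [Fintype X] (κ : X → S → ℝ) : Prop :=
  (∀ x s, 0 ≤ κ x s) ∧ ∀ s, ∑ x, κ x s = 1

/-- `κ₁` is a garbling of `κ₂` (the Blackwell order `κ₁ ⪯ κ₂`). -/
def IsGarbling {S X₁ X₂ : Type} [Fintype S] [Fintype X₁] [Fintype X₂]
    (κ₁ : X₁ → S → ℝ) (κ₂ : X₂ → S → ℝ) : Prop :=
  ∃ lam : X₁ → X₂ → ℝ, IsChannel lam ∧ ∀ x₁ s, κ₁ x₁ s = ∑ x₂, lam x₁ x₂ * κ₂ x₂ s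

/-- Optimal expected utility: maximum over decision rules `d : X → A`. -/
noncomputable def optUtility {S X A : Type} [Fintype S] [Fintype X] [Fintype A]
    (p : S → ℝ) (u : A × S → ℝ) (κ : X → S → ℝ) : ℝ :=
  ⨆ d : X → A, ∑ s, ∑ x, p s * κ x s * u (d x, s)

/-- Mutual information between input (with distribution `p`) and output of channel `κ`;
terms with `κ x s = 0` are taken to be `0`. -/
noncomputable def mutualInfo {S X : Type} [Fintype S] [Fintype X]
    (p : S → ℝ) (κ : X → S → ℝ) : ℝ :=
  ∑ s, ∑ x, if κ x s = 0 then 0 else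
    p s * κ x s * Real.log (κ x s / ∑ s', p s' * κ x s')

/-- Channel composition: `(κ·λ) x s = ∑ t, κ x t * λ t s`. -/
def chanComp {S T X : Type} [Fintype S] [Fintype T] [Fintype X]
    (κ : X → T → ℝ) (lam : T → S → ℝ) : X → S → ℝ :=
  fun x s => ∑ t, κ x t * lam t s

/-- Marginal on `S` of a joint distribution on `S × X₁ × X₂`. -/
noncomputable def margS3 {S X₁ X₂ : Type} [Fintype S] [Fintype X₁] [Fintype X₂]
    (P : S × X₁ × X₂ → ℝ) (s : S) : ℝ := ∑ x₁, ∑ x₂, P (s, x₁, x₂)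

/-- The channel `X₁ ← S` of conditional probabilities `P(X₁ = x₁ | S = s)`. -/
noncomputable def chan1of3 {S X₁ X₂ : Type} [Fintype S] [Fintype X₁] [Fintype X₂]
    (P : S × X₁ × X₂ → ℝ) (x₁ : X₁) (s : S) : ℝ :=
  (∑ x₂, P (s, x₁, x₂)) / margS3 P s

/-- The channel `X₂ ← S` of conditional probabilities `P(X₂ = x₂ | S = s)`. -/
noncomputable def chan2of3 {S X₁ X₂ : Type} [Fintype S] [Fintype X₁] [Fintype X₂]
    (P : S × X₁ × X₂ → ℝ) (x₂ : X₂) (s : S) : ℝ :=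
  (∑ x₁, P (s, x₁, x₂)) / margS3 P s

/-- Pushforward of a joint distribution on `S × X₁ × X₂` along `f : S → S'`. -/
noncomputable def push3 {S S' X₁ X₂ : Type} [Fintype S] [Fintype X₁] [Fintype X₂]
    [DecidableEq S'] (f : S → S') (P : S × X₁ × X₂ → ℝ) : S' × X₁ × X₂ → ℝ :=
  fun q => ∑ s ∈ Finset.univ.filter (fun s => f s = q.1), P (s, q.2.1, q.2.2)

/-!
The Markov approximation is `κ' = κ ∘ λ` for the input kernel `λ t s = p t / p(f⁻¹(f s))` on the
fibre of `s`, which is stochastic and leaves `p` invariant. Writing `I(p, κ) = H(Y) - H(Y | S)`,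
invariance of `p` makes the output law of `κ'` equal to that of `κ`, so `H(Y)` is unchanged, while
concavity of `-t log t` (Jensen along each column of `λ`) can only increase `H(Y | S)`.
-/

open Real

section MutualInfo

variable {S X : Type} [Fintype S] [Fintype X]

theorem mutualInfo_eq_sum_negMulLog (p : S → ℝ) (κ : X → S → ℝ) (hp : ∀ s, 0 ≤ p s)
    (hκ : ∀ x s, 0 ≤ κ x s) :
    mutualInfo p κ = ∑ x, (negMulLog (∑ s, p s * κ x s) - ∑ s, p s * negMulLog (κ x s)) := by
  unfold mutualInfo
  rw [Finset.sum_comm]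
  refine Finset.sum_congr rfl fun x _ => ?_
  set q := ∑ s, p s * κ x s
  have hterm : ∀ s, (if κ x s = 0 then 0 else p s * κ x s * log (κ x s / q)) =
      -(p s * κ x s * log q) - p s * negMulLog (κ x s) := by
    intro s
    by_cases hκ0 : κ x s = 0
    · simp [hκ0]
    rcases (hp s).eq_or_lt with hp0 | hp0
    · simp [← hp0, hκ0]
    have hq : 0 < q := (mul_pos hp0 ((hκ x s).lt_of_ne' hκ0)).trans_le
      (Finset.single_le_sum (fun s _ => mul_nonneg (hp s) (hκ x s)) (Finset.mem_univ s))
    rw [if_neg hκ0, log_div hκ0 hq.ne', negMulLog]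
    ring
  rw [Finset.sum_congr rfl fun s _ => hterm s, Finset.sum_sub_distrib, Finset.sum_neg_distrib,
    ← Finset.sum_mul, negMulLog]
  ring

end MutualInfo

section InputKernel

variable {S X : Type} [Fintype S] [Fintype X]

theorem chanComp_nonneg {κ : X → S → ℝ} {lam : S → S → ℝ} (hκ : ∀ x s, 0 ≤ κ x s)
    (hlam : IsChannel lam) (x : X) (s : S) : 0 ≤ chanComp κ lam x s :=
  Finset.sum_nonneg fun t _ => mul_nonneg (hκ x t) (hlam.1 t s)

theorem sum_mul_sum_of_invariant {p : S → ℝ} {lam : S → S → ℝ}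
    (hinv : ∀ t, ∑ s, lam t s * p s = p t) (g : S → ℝ) :
    ∑ s, p s * ∑ t, lam t s * g t = ∑ t, p t * g t := by
  simp only [Finset.mul_sum]
  rw [Finset.sum_comm]
  refine Finset.sum_congr rfl fun t _ => ?_
  rw [← hinv t, Finset.sum_mul]
  exact Finset.sum_congr rfl fun s _ => by ring

theorem sum_mul_chanComp_of_invariant (p : S → ℝ) (κ : X → S → ℝ) {lam : S → S → ℝ}
    (hinv : ∀ t, ∑ s, lam t s * p s = p t) (x : X) :
    ∑ s, p s * chanComp κ lam x s = ∑ s, p s * κ x s := by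
  simp only [chanComp, mul_comm (κ x _)]
  exact sum_mul_sum_of_invariant hinv (κ x)

theorem sum_mul_negMulLog_le_chanComp {p : S → ℝ} {κ : X → S → ℝ} {lam : S → S → ℝ}
    (hp : ∀ s, 0 ≤ p s) (hκ : ∀ x s, 0 ≤ κ x s) (hlam : IsChannel lam)
    (hinv : ∀ t, ∑ s, lam t s * p s = p t) (x : X) :
    ∑ s, p s * negMulLog (κ x s) ≤ ∑ s, p s * negMulLog (chanComp κ lam x s) := by
  have hjensen : ∀ s, ∑ t, lam t s * negMulLog (κ x t) ≤ negMulLog (chanComp κ lam x s) := by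
    intro s
    have := concaveOn_negMulLog.le_map_sum (t := Finset.univ) (w := fun t => lam t s)
      (p := κ x) (fun t _ => hlam.1 t s) (hlam.2 s) (fun t _ => Set.mem_Ici.2 (hκ x t))
    simpa only [chanComp, smul_eq_mul, mul_comm (κ x _)] using this
  rw [← sum_mul_sum_of_invariant hinv]
  exact Finset.sum_le_sum fun s _ => mul_le_mul_of_nonneg_left (hjensen s) (hp s)

theorem mutualInfo_chanComp_le {p : S → ℝ} {κ : X → S → ℝ} {lam : S → S → ℝ}
    (hp : ∀ s, 0 ≤ p s) (hκ : ∀ x s, 0 ≤ κ x s) (hlam : IsChannel lam)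
    (hinv : ∀ t, ∑ s, lam t s * p s = p t) :
    mutualInfo p (chanComp κ lam) ≤ mutualInfo p κ := by
  rw [mutualInfo_eq_sum_negMulLog p κ hp hκ,
    mutualInfo_eq_sum_negMulLog p _ hp (chanComp_nonneg hκ hlam)]
  refine Finset.sum_le_sum fun x _ => ?_
  rw [sum_mul_chanComp_of_invariant p κ hinv x]
  linarith [sum_mul_negMulLog_le_chanComp hp hκ hlam hinv x]

end InputKernel

section FiberKernel

variable {S S' : Type} [Fintype S] [DecidableEq S']

noncomputable def fiberKernel (f : S → S') (p : S → ℝ) (t s : S) : ℝ :=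
  if f t = f s then p t / ∑ s' ∈ Finset.univ.filter (fun s' => f s' = f s), p s' else 0

theorem chanComp_fiberKernel {X : Type} [Fintype X] (κ : X → S → ℝ) (f : S → S') (p : S → ℝ)
    (x : X) (s : S) :
    chanComp κ (fiberKernel f p) x s =
      (∑ s' ∈ Finset.univ.filter (fun s' => f s' = f s), p s' * κ x s') /
        (∑ s' ∈ Finset.univ.filter (fun s' => f s' = f s), p s') := by
  rw [Finset.sum_div, Finset.sum_filter]
  refine Finset.sum_congr rfl fun t _ => ?_
  unfold fiberKernel
  split_ifs <;> ring

variable {f : S → S'} {p : S → ℝ}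

theorem sum_filter_fiber_pos (hp : ∀ s, 0 < p s) (s : S) :
    0 < ∑ s' ∈ Finset.univ.filter (fun s' => f s' = f s), p s' :=
  Finset.sum_pos (fun s' _ => hp s') ⟨s, Finset.mem_filter.2 ⟨Finset.mem_univ s, rfl⟩⟩

theorem fiberKernel_isChannel (hp : ∀ s, 0 < p s) : IsChannel (fiberKernel f p) := by
  refine ⟨fun t s => ?_, fun s => ?_⟩
  · unfold fiberKernel
    split_ifs
    exacts [div_nonneg (hp t).le (sum_filter_fiber_pos hp s).le, le_rfl]
  · simp only [fiberKernel]
    rw [← Finset.sum_filter, ← Finset.sum_div, div_self (sum_filter_fiber_pos hp s).ne']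

theorem sum_fiberKernel_mul (hp : ∀ s, 0 < p s) (t : S) :
    ∑ s, fiberKernel f p t s * p s = p t := by
  have hfiber : ∀ s, fiberKernel f p t s * p s =
      if f s = f t then p t / (∑ s' ∈ Finset.univ.filter (fun s' => f s' = f t), p s') * p s
      else 0 := by
    intro s
    unfold fiberKernel
    by_cases h : f t = f s
    · rw [if_pos h, if_pos h.symm, h]
    · rw [if_neg h, if_neg (Ne.symm h), zero_mul]
  rw [Finset.sum_congr rfl fun s _ => hfiber s, ← Finset.sum_filter, ← Finset.mul_sum,
    div_mul_cancel₀ _ (sum_filter_fiber_pos hp t).ne']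

end FiberKernel

theorem markov_approx_less_capable {S S' X : Type}
    [Fintype S] [Fintype X] [DecidableEq S']
    (κ : X → S → ℝ) (hκ : IsChannel κ) (f : S → S')
    (p : S → ℝ) (hfull : ∀ s, 0 < p s)
    (κ' : X → S → ℝ)
    (hκ' : ∀ x s, κ' x s =
      (∑ s' ∈ Finset.univ.filter (fun s' => f s' = f s), p s' * κ x s') /
        (∑ s' ∈ Finset.univ.filter (fun s' => f s' = f s), p s')) :
    mutualInfo p κ' ≤ mutualInfo p κ := by
  have hκ'_eq : κ' = chanComp κ (fiberKernel f p) :=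
    funext₂ fun x s => (hκ' x s).trans (chanComp_fiberKernel κ f p x s).symm
  rw [hκ'_eq]
  exact mutualInfo_chanComp_le (fun s => (hfull s).le) hκ.1 (fiberKernel_isChannel hfull)
    (sum_fiberKernel_mul hfull)
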